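/- Let d, N ≥ 1 and Y = (0,1)^d. Let M : ℝ^d × ℝ^{d×N} → [0,∞) be Carathéodory and ℤ^d-periodic in its first variable, such that M(y,·) is convex and even for a.e. y, and suppose there are N-function profiles m₁, m₂ with m₁(|ξ|) ≤ M(y,ξ) ≤ m₂(|ξ|) for a.e. y ∈ ℝ^d and every ξ ∈ ℝ^{d×N}. Define f : ℝ^{d×N} → [0,∞) by f(ξ) = inf { ∫_Y M(y, ξ + ∇w(y)) dy : w ∈ C^∞(ℝ^d; ℝ^N) ℤ^d-periodic }, where ∇w(y) ∈ ℝ^{d×N} is the gradient matrix of w. Then f is real-valued, m₁(|ξ|) ≤ f(ξ) ≤ m₂(|ξ|) for all ξ, and f is an N-function: (1) f(ξ) = 0 if and only if ξ = 0; (2) f(−ξ) = f(ξ); (3) f is convex; (4) f(ξ)/|ξ| → 0 as ξ → 0 and f(ξ)/|ξ| → ∞ as |ξ| → ∞. -/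

import Mathlib

open MeasureTheory Set Filter Topology

/-- The unit cell `Y = (0,1)^d`. -/
def unitCell (d : ℕ) : Set (Fin d → ℝ) := univ.pi fun _ => Ioo (0 : ℝ) 1

/-- An `N`-function profile: a convex `m : [0,∞) → [0,∞)` vanishing exactly at `0`,
with `m(t)/t → 0` as `t → 0⁺` and `m(t)/t → ∞` as `t → ∞`. -/
def IsNFunctionProfile (m : ℝ → ℝ) : Prop :=
  ConvexOn ℝ (Ici 0) m ∧ (∀ t, 0 ≤ t → 0 ≤ m t) ∧
    (∀ t, 0 ≤ t → (m t = 0 ↔ t = 0)) ∧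
    Tendsto (fun t => m t / t) (𝓝[>] 0) (𝓝 0) ∧
    Tendsto (fun t => m t / t) atTop atTop

/-- The gradient matrix `∇w(y) ∈ ℝ^{d×N}`, `(∇w)_{ij} = ∂_{y_i} w_j(y)`, viewed as an
element of `ℝ^{d×N}` with the Frobenius (Euclidean) norm. -/
noncomputable def gradMat {d N : ℕ} (w : (Fin d → ℝ) → (Fin N → ℝ)) (y : Fin d → ℝ) :
    EuclideanSpace ℝ (Fin d × Fin N) :=
  WithLp.toLp 2 (fun p : Fin d × Fin N => fderiv ℝ w y (Pi.single p.1 1) p.2)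

section profile
variable {m : ℝ → ℝ}

lemma nfp_zero (hm : IsNFunctionProfile m) : m 0 = 0 :=
  (hm.2.2.1 0 le_rfl).mpr rfl

lemma nfp_mono (hm : IsNFunctionProfile m) {s t : ℝ} (hs : 0 ≤ s) (hst : s ≤ t) :
    m s ≤ m t := by
  rcases eq_or_lt_of_le hst with rfl | hlt
  · exact le_rfl
  have ht : 0 < t := lt_of_le_of_lt hs hlt
  have hd1 : s / t ≤ 1 := (div_le_one ht).mpr hst
  have h := hm.1.2 (mem_Ici.mpr ht.le : (t:ℝ) ∈ Ici 0) (mem_Ici.mpr le_rfl : (0:ℝ) ∈ Ici 0)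
    (div_nonneg hs ht.le) (by linarith : (0:ℝ) ≤ 1 - s/t)
    (by ring : s/t + (1 - s/t) = 1)
  have hst' : (s/t) • t + (1 - s/t) • (0:ℝ) = s := by
    simp [smul_eq_mul, div_mul_cancel₀ _ (ne_of_gt ht)]
  rw [hst'] at h
  calc m s ≤ (s/t) • m t + (1 - s/t) • m 0 := h
    _ = s/t * m t := by rw [nfp_zero hm]; simp [smul_eq_mul]
    _ ≤ 1 * m t := by
        apply mul_le_mul_of_nonneg_right _ (hm.2.1 t (hs.trans hst))
        exact (div_le_one ht).mpr hst
    _ = m t := one_mul _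

lemma nfp_tendsto_zero (hm : IsNFunctionProfile m) : Tendsto m (𝓝[>] (0:ℝ)) (𝓝 0) := by
  have h : Tendsto (fun t => (m t / t) * t) (𝓝[>] (0:ℝ)) (𝓝 0) := by
    have := hm.2.2.2.1.mul (tendsto_id.mono_left (nhdsWithin_le_nhds (s := Ioi (0:ℝ))))
    simpa using this
  refine h.congr' ?_
  filter_upwards [self_mem_nhdsWithin] with t ht
  exact div_mul_cancel₀ (m t) (ne_of_gt ht)

lemma nfp_continuousOn (hm : IsNFunctionProfile m) : ContinuousOn m (Ici 0) := by
  intro t ht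
  rcases eq_or_lt_of_le (mem_Ici.mp ht) with rfl | hpos
  · -- t = 0
    rw [ContinuousWithinAt, ← Ioi_insert, nhdsWithin_insert, nfp_zero hm]
    exact Tendsto.sup (by simpa [nfp_zero hm] using tendsto_pure_nhds m 0) (nfp_tendsto_zero hm)
  · have hconv : ConvexOn ℝ (Ioi (0:ℝ)) m :=
      hm.1.subset (Ioi_subset_Ici le_rfl) (convex_Ioi 0)
    exact ((hconv.continuousOn isOpen_Ioi).continuousAt
      (Ioi_mem_nhds hpos)).continuousWithinAt

lemma nfp_norm_continuous {F : Type*} [SeminormedAddCommGroup F] (hm : IsNFunctionProfile m) :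
    Continuous fun ξ : F => m ‖ξ‖ := by
  exact continuousOn_univ.mp
    ((nfp_continuousOn hm).comp continuous_norm.continuousOn fun x _ => norm_nonneg x)

lemma nfp_norm_convexOn {F : Type*} [NormedAddCommGroup F] [NormedSpace ℝ F]
    (hm : IsNFunctionProfile m) : ConvexOn ℝ univ fun ξ : F => m ‖ξ‖ := by
  refine ⟨convex_univ, fun x _ y _ a b ha hb hab => ?_⟩
  have h1 : ‖a • x + b • y‖ ≤ a * ‖x‖ + b * ‖y‖ := by
    calc ‖a • x + b • y‖ ≤ ‖a • x‖ + ‖b • y‖ := norm_add_le _ _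
      _ = a * ‖x‖ + b * ‖y‖ := by
          rw [norm_smul, norm_smul, Real.norm_eq_abs, Real.norm_eq_abs,
            abs_of_nonneg ha, abs_of_nonneg hb]
  calc m ‖a • x + b • y‖ ≤ m (a * ‖x‖ + b * ‖y‖) :=
        nfp_mono hm (norm_nonneg _) h1
    _ ≤ a * m ‖x‖ + b * m ‖y‖ :=
        hm.1.2 (mem_Ici.mpr (norm_nonneg x)) (mem_Ici.mpr (norm_nonneg y)) ha hb hab

end profile

section cell
variable {d N : ℕ}

lemma measurableSet_unitCell : MeasurableSet (unitCell d) :=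
  MeasurableSet.univ_pi fun _ => measurableSet_Ioo

lemma volume_unitCell : (volume : Measure (Fin d → ℝ)) (unitCell d) = 1 := by
  simp [unitCell, volume_pi_pi]

lemma isProbability_unitCell :
    IsProbabilityMeasure ((volume : Measure (Fin d → ℝ)).restrict (unitCell d)) :=
  ⟨by rw [Measure.restrict_apply_univ, volume_unitCell]⟩

lemma unitCell_subset_Icc : unitCell d ⊆ Icc (0 : Fin d → ℝ) 1 := by
  rw [← pi_univ_Icc]
  exact pi_mono fun i _ => Ioo_subset_Icc_self

lemma integrableOn_unitCell_of_continuous {β : Type*} [NormedAddCommGroup β]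
    {g : (Fin d → ℝ) → β} (hg : Continuous g) : IntegrableOn g (unitCell d) :=
  (hg.continuousOn.integrableOn_compact isCompact_Icc).mono_set unitCell_subset_Icc

lemma gradMat_continuous {w : (Fin d → ℝ) → (Fin N → ℝ)} (hw : ContDiff ℝ (⊤ : ℕ∞) w) :
    Continuous (gradMat w) := by
  have h : Continuous fun y => (fun p : Fin d × Fin N => fderiv ℝ w y (Pi.single p.1 1) p.2) := by
    apply continuous_pi
    intro p
    exact (continuous_apply p.2).comp ((hw.continuous_fderiv (by simp)).clm_apply continuous_const)
  exact (EuclideanSpace.equiv (Fin d × Fin N) ℝ).symm.continuous.comp h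

lemma integral_fderiv_single (hd : 1 ≤ d) {w : (Fin d → ℝ) → (Fin N → ℝ)}
    (hw : ContDiff ℝ (⊤ : ℕ∞) w)
    (hper : ∀ (y : Fin d → ℝ) (k : Fin d → ℤ), w (y + fun i => (k i : ℝ)) = w y) (i : Fin d) :
    ∫ y in unitCell d, fderiv ℝ w y (Pi.single i 1) = (0 : Fin N → ℝ) := by
  obtain ⟨n, rfl⟩ : ∃ n, d = n + 1 := ⟨d - 1, (Nat.succ_pred_eq_of_pos hd).symm⟩
  set F : Fin (n+1) → (Fin (n+1) → ℝ) → (Fin N → ℝ) := fun k => if k = i then w else 0 with hF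
  set F' : Fin (n+1) → (Fin (n+1) → ℝ) → (Fin (n+1) → ℝ) →L[ℝ] (Fin N → ℝ) :=
    fun k x => if k = i then fderiv ℝ w x else 0 with hF'
  have hsum : ∀ x, (∑ k, F' k x (Pi.single k 1)) = fderiv ℝ w x (Pi.single i 1) := by
    intro x
    rw [Finset.sum_eq_single i]
    · simp [hF']
    · intro k _ hk; simp [hF', hk]
    · simp
  have hcont : Continuous fun x : Fin (n+1) → ℝ => fderiv ℝ w x (Pi.single i 1) :=
    (hw.continuous_fderiv (by simp)).clm_apply continuous_const
  have hsumf : (fun x => ∑ k, F' k x (Pi.single k 1))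
      = fun x : Fin (n+1) → ℝ => fderiv ℝ w x (Pi.single i 1) := funext hsum
  have key := MeasureTheory.integral_divergence_of_hasFDerivAt_off_countable'
    (a := (0 : Fin (n+1) → ℝ)) (b := 1) zero_le_one F F' ∅ countable_empty
    (fun k => by
      by_cases hk : k = i
      · simpa [hF, hk] using hw.continuous.continuousOn
      · simp only [hF, if_neg hk]; exact continuousOn_const)
    (fun x _ k => by
      by_cases hk : k = i
      · simp only [hF, hF', hk, if_pos rfl]
        exact (hw.differentiable (by simp) x).hasFDerivAt
      · simp only [hF, hF', if_neg hk]
        exact hasFDerivAt_const 0 x)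
    (by rw [hsumf]; exact hcont.continuousOn.integrableOn_compact isCompact_Icc)
  rw [hsumf] at key
  have hRHS : (∑ k : Fin (n+1),
      ((∫ x in Icc ((0:Fin (n+1) → ℝ) ∘ k.succAbove) ((1:Fin (n+1) → ℝ) ∘ k.succAbove),
          F k (k.insertNth ((1:Fin (n+1) → ℝ) k) x)) -
        ∫ x in Icc ((0:Fin (n+1) → ℝ) ∘ k.succAbove) ((1:Fin (n+1) → ℝ) ∘ k.succAbove),
          F k (k.insertNth ((0:Fin (n+1) → ℝ) k) x))) = 0 := by
    apply Finset.sum_eq_zero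
    intro k _
    by_cases hk : k = i
    · subst hk
      rw [sub_eq_zero]
      apply integral_congr_ae
      filter_upwards with x
      have hins : k.insertNth ((1:Fin (n+1) → ℝ) k) x
          = (k.insertNth ((0:Fin (n+1) → ℝ) k) x) + fun j => ((Pi.single k 1 : Fin (n+1) → ℤ) j : ℝ) := by
        funext j
        refine Fin.succAboveCases k ?_ ?_ j
        · simp
        · intro q
          simp [Fin.insertNth_apply_succAbove, Pi.single_eq_of_ne (Fin.succAbove_ne k q)]
      have hFk : F k = w := by simp [hF]
      rw [hFk, hins]
      exact hper _ (Pi.single k 1)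
    · simp [hF, if_neg hk]
  rw [hRHS] at key
  have hcell : ∫ y in unitCell (n+1), fderiv ℝ w y (Pi.single i 1)
      = ∫ y in Icc (0 : Fin (n+1) → ℝ) 1, fderiv ℝ w y (Pi.single i 1) := by
    rw [show unitCell (n+1)
      = univ.pi fun j => Ioo ((0:Fin (n+1) → ℝ) j) ((1:Fin (n+1) → ℝ) j) from rfl, volume_pi]
    exact setIntegral_congr_set Measure.univ_pi_Ioo_ae_eq_Icc
  rw [hcell, key]

lemma integral_gradMat_zero (hd : 1 ≤ d) {w : (Fin d → ℝ) → (Fin N → ℝ)}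
    (hw : ContDiff ℝ (⊤ : ℕ∞) w)
    (hper : ∀ (y : Fin d → ℝ) (k : Fin d → ℤ), w (y + fun i => (k i : ℝ)) = w y) :
    ∫ y in unitCell d, gradMat w y = (0 : EuclideanSpace ℝ (Fin d × Fin N)) := by
  have hint : IntegrableOn (gradMat w) (unitCell d) :=
    integrableOn_unitCell_of_continuous (gradMat_continuous hw)
  have hcoord : ∀ p : Fin d × Fin N, (∫ y in unitCell d, gradMat w y) p = 0 := by
    intro p
    have hfint : IntegrableOn (fun y => fderiv ℝ w y (Pi.single p.1 1)) (unitCell d) :=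
      integrableOn_unitCell_of_continuous
        ((hw.continuous_fderiv (by simp)).clm_apply continuous_const)
    let L : EuclideanSpace ℝ (Fin d × Fin N) →L[ℝ] ℝ :=
      (ContinuousLinearMap.proj (R := ℝ) (φ := fun _ : Fin d × Fin N => ℝ) p).comp
        (EuclideanSpace.equiv (Fin d × Fin N) ℝ).toContinuousLinearMap
    calc (∫ y in unitCell d, gradMat w y) p
        = L (∫ y in unitCell d, gradMat w y) := rfl
      _ = ∫ y in unitCell d, L (gradMat w y) := (L.integral_comp_comm hint).symm
      _ = ∫ y in unitCell d, fderiv ℝ w y (Pi.single p.1 1) p.2 := rfl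
      _ = (ContinuousLinearMap.proj (R := ℝ) (φ := fun _ : Fin N => ℝ) p.2)
            (∫ y in unitCell d, fderiv ℝ w y (Pi.single p.1 1)) :=
          ContinuousLinearMap.integral_comp_comm
            (ContinuousLinearMap.proj (R := ℝ) (φ := fun _ : Fin N => ℝ) p.2) hfint
      _ = 0 := by rw [integral_fderiv_single hd hw hper p.1]; simp
  ext p
  exact hcoord p

end cell

section meas
variable {d N : ℕ}

lemma measurable_comp_countable_range {β : Type*} {γ : Type*} [MeasurableSpace γ]
    [MeasurableSingletonClass γ]
    {F : (Fin d → ℝ) → β → ℝ} (hF : ∀ b, Measurable fun y => F y b)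
    {ρ : (Fin d → ℝ) → γ} (hρ : Measurable ρ) (hcount : (range ρ).Countable)
    (φ : γ → β) : Measurable fun y => F y (φ (ρ y)) := by
  intro s hs
  have hset : (fun y => F y (φ (ρ y))) ⁻¹' s
      = ⋃ c ∈ range ρ, ({y | ρ y = c} ∩ {y | F y (φ c) ∈ s}) := by
    ext y
    simp only [mem_preimage, mem_iUnion, mem_inter_iff, mem_setOf_eq, mem_range,
      exists_prop]
    constructor
    · intro h; exact ⟨ρ y, ⟨y, rfl⟩, rfl, h⟩
    · rintro ⟨c, _, hc, h⟩; rw [hc]; exact h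
  rw [hset]
  exact MeasurableSet.biUnion hcount fun c _ =>
    MeasurableSet.inter (hρ (measurableSet_singleton c)) (hF (φ c) hs)

lemma aemeasurable_M_comp (M : (Fin d → ℝ) → EuclideanSpace ℝ (Fin d × Fin N) → ℝ)
    (hMmeas : ∀ ξ, Measurable fun y => M y ξ)
    (hMcont : ∀ᵐ y ∂(volume : Measure (Fin d → ℝ)), Continuous (M y))
    {g : (Fin d → ℝ) → EuclideanSpace ℝ (Fin d × Fin N)} (hg : Continuous g) :
    AEMeasurable (fun y => M y (g y)) volume := by
  set ρ : ℕ → (Fin d → ℝ) → (Fin d → ℝ) :=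
    fun n y i => ((⌊y i * ((n : ℝ)+1)⌋ : ℤ) : ℝ) / ((n : ℝ)+1) with hρdef
  have hρmeas : ∀ n, Measurable (ρ n) := by
    intro n
    apply measurable_pi_lambda
    intro i
    exact ((measurable_of_countable _).comp
      ((measurable_pi_apply i).mul_const _).floor).div_const _
  have hρrange : ∀ n, (range (ρ n)).Countable := by
    intro n
    have hsub : range (ρ n) ⊆ range (fun z : Fin d → ℤ => fun i => (z i : ℝ) / ((n:ℝ)+1)) := by
      rintro _ ⟨y, rfl⟩
      exact ⟨fun i => ⌊y i * ((n:ℝ)+1)⌋, rfl⟩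
    exact (countable_range _).mono hsub
  have hρtend : ∀ y, Tendsto (fun n => ρ n y) atTop (𝓝 y) := by
    intro y
    rw [tendsto_pi_nhds]
    intro i
    have hle : ∀ n : ℕ, y i - 1/((n:ℝ)+1) ≤ ρ n y i := by
      intro n
      have hpos : (0:ℝ) < (n:ℝ)+1 := by positivity
      have h1 : y i * ((n:ℝ)+1) - 1 ≤ ((⌊y i * ((n:ℝ)+1)⌋ : ℤ) : ℝ) :=
        (Int.sub_one_lt_floor _).le
      have h2 : y i - 1/((n:ℝ)+1) = (y i * ((n:ℝ)+1) - 1)/((n:ℝ)+1) := by field_simp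
      calc y i - 1/((n:ℝ)+1) = (y i * ((n:ℝ)+1) - 1)/((n:ℝ)+1) := h2
        _ ≤ ((⌊y i * ((n:ℝ)+1)⌋ : ℤ) : ℝ) / ((n:ℝ)+1) := (div_le_div_iff_of_pos_right hpos).mpr h1
        _ = ρ n y i := rfl
    have hge : ∀ n : ℕ, ρ n y i ≤ y i := by
      intro n
      have hpos : (0:ℝ) < (n:ℝ)+1 := by positivity
      have h1 : ((⌊y i * ((n:ℝ)+1)⌋ : ℤ) : ℝ) ≤ y i * ((n:ℝ)+1) := Int.floor_le _
      calc ρ n y i = ((⌊y i * ((n:ℝ)+1)⌋ : ℤ) : ℝ) / ((n:ℝ)+1) := rfl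
        _ ≤ (y i * ((n:ℝ)+1))/((n:ℝ)+1) := (div_le_div_iff_of_pos_right hpos).mpr h1
        _ = y i := by field_simp
    have hlim : Tendsto (fun n : ℕ => y i - 1/((n:ℝ)+1)) atTop (𝓝 (y i)) := by
      simpa using (tendsto_const_nhds : Tendsto (fun _ : ℕ => y i) atTop (𝓝 (y i))).sub tendsto_one_div_add_atTop_nhds_zero_nat
    exact tendsto_of_tendsto_of_tendsto_of_le_of_le hlim tendsto_const_nhds hle hge
  have hmeasn : ∀ n, Measurable fun y => M y (g (ρ n y)) := fun n =>
    measurable_comp_countable_range hMmeas (hρmeas n) (hρrange n) g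
  apply aemeasurable_of_tendsto_metrizable_ae atTop (fun n => (hmeasn n).aemeasurable)
  filter_upwards [hMcont] with y hy
  exact (hy.tendsto _).comp ((hg.tendsto y).comp (hρtend y))

lemma integrableOn_M_comp (M : (Fin d → ℝ) → EuclideanSpace ℝ (Fin d × Fin N) → ℝ)
    (hMmeas : ∀ ξ, Measurable fun y => M y ξ)
    (hMcont : ∀ᵐ y ∂(volume : Measure (Fin d → ℝ)), Continuous (M y))
    {m₁ m₂ : ℝ → ℝ} (hm₁ : IsNFunctionProfile m₁) (hm₂ : IsNFunctionProfile m₂)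
    (hsand : ∀ᵐ y ∂(volume : Measure (Fin d → ℝ)), ∀ ξ, m₁ ‖ξ‖ ≤ M y ξ ∧ M y ξ ≤ m₂ ‖ξ‖)
    {g : (Fin d → ℝ) → EuclideanSpace ℝ (Fin d × Fin N)} (hg : Continuous g) :
    IntegrableOn (fun y => M y (g y)) (unitCell d) := by
  have ham : AEStronglyMeasurable (fun y => M y (g y))
      ((volume : Measure (Fin d → ℝ)).restrict (unitCell d)) :=
    ((aemeasurable_M_comp M hMmeas hMcont hg).restrict).aestronglyMeasurable
  refine Integrable.mono'
    (integrableOn_unitCell_of_continuous ((nfp_norm_continuous hm₂).comp hg)) ham ?_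
  filter_upwards [ae_restrict_of_ae hsand] with y hy
  have h0 : 0 ≤ M y (g y) :=
    le_trans (hm₁.2.1 _ (norm_nonneg _)) (hy (g y)).1
  rw [Real.norm_eq_abs, abs_of_nonneg h0]
  exact (hy (g y)).2

lemma jensen_lower (hd : 1 ≤ d)
    (M : (Fin d → ℝ) → EuclideanSpace ℝ (Fin d × Fin N) → ℝ)
    (hMmeas : ∀ ξ, Measurable fun y => M y ξ)
    (hMcont : ∀ᵐ y ∂(volume : Measure (Fin d → ℝ)), Continuous (M y))
    {m₁ m₂ : ℝ → ℝ} (hm₁ : IsNFunctionProfile m₁) (hm₂ : IsNFunctionProfile m₂)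
    (hsand : ∀ᵐ y ∂(volume : Measure (Fin d → ℝ)), ∀ ξ, m₁ ‖ξ‖ ≤ M y ξ ∧ M y ξ ≤ m₂ ‖ξ‖)
    (ξ : EuclideanSpace ℝ (Fin d × Fin N)) {w : (Fin d → ℝ) → (Fin N → ℝ)}
    (hw : ContDiff ℝ (⊤ : ℕ∞) w)
    (hper : ∀ (y : Fin d → ℝ) (k : Fin d → ℤ), w (y + fun i => (k i : ℝ)) = w y) :
    m₁ ‖ξ‖ ≤ ∫ y in unitCell d, M y (ξ + gradMat w y) := by
  haveI := isProbability_unitCell (d := d)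
  set g : (Fin d → ℝ) → EuclideanSpace ℝ (Fin d × Fin N) := fun y => ξ + gradMat w y with hgdef
  have hgcont : Continuous g := continuous_const.add (gradMat_continuous hw)
  have hgint : Integrable g ((volume : Measure (Fin d → ℝ)).restrict (unitCell d)) :=
    integrableOn_unitCell_of_continuous hgcont
  have hintg : ∫ y in unitCell d, g y = ξ := by
    rw [hgdef]
    rw [integral_add (integrable_const ξ)
      (integrableOn_unitCell_of_continuous (gradMat_continuous hw))]
    rw [integral_gradMat_zero hd hw hper, integral_const]
    simp
  have hm₁int : Integrable ((fun ζ : EuclideanSpace ℝ (Fin d × Fin N) => m₁ ‖ζ‖) ∘ g)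
      ((volume : Measure (Fin d → ℝ)).restrict (unitCell d)) :=
    integrableOn_unitCell_of_continuous ((nfp_norm_continuous hm₁).comp hgcont)
  have hjen := (nfp_norm_convexOn hm₁).map_integral_le
    (nfp_norm_continuous hm₁).continuousOn isClosed_univ
    (Eventually.of_forall fun _ => mem_univ _) hgint hm₁int
  rw [hintg] at hjen
  refine le_trans hjen (integral_mono_ae hm₁int
    (integrableOn_M_comp M hMmeas hMcont hm₁ hm₂ hsand hgcont) ?_)
  filter_upwards [ae_restrict_of_ae hsand] with y hy using (hy (g y)).1

end meas

/-- **The homogenized integrand `f` is an `N`-function** (the paper's Lemma 2.4, with the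
infimum taken over gradients of smooth `ℤ^d`-periodic functions). -/
theorem homogenized_f_is_NFunction
    (d N : ℕ) (hd : 1 ≤ d) (hN : 1 ≤ N)
    (M : (Fin d → ℝ) → EuclideanSpace ℝ (Fin d × Fin N) → ℝ)
    (hMmeas : ∀ ξ, Measurable fun y => M y ξ)
    (hMcont : ∀ᵐ y ∂(volume : Measure (Fin d → ℝ)), Continuous (M y))
    (hMper : ∀ (y : Fin d → ℝ) (ξ) (k : Fin d → ℤ),
      M (y + fun i => (k i : ℝ)) ξ = M y ξ)
    (hMconv : ∀ᵐ y ∂(volume : Measure (Fin d → ℝ)), ConvexOn ℝ univ (M y))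
    (hMeven : ∀ᵐ y ∂(volume : Measure (Fin d → ℝ)), ∀ ξ, M y (-ξ) = M y ξ)
    (m₁ m₂ : ℝ → ℝ) (hm₁ : IsNFunctionProfile m₁) (hm₂ : IsNFunctionProfile m₂)
    (hsand : ∀ᵐ y ∂(volume : Measure (Fin d → ℝ)),
      ∀ ξ, m₁ ‖ξ‖ ≤ M y ξ ∧ M y ξ ≤ m₂ ‖ξ‖)
    (f : EuclideanSpace ℝ (Fin d × Fin N) → ℝ)
    (hf : ∀ ξ, f ξ = sInf {r : ℝ | ∃ w : (Fin d → ℝ) → (Fin N → ℝ),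
      ContDiff ℝ (⊤ : ℕ∞) w ∧
      (∀ (y : Fin d → ℝ) (k : Fin d → ℤ), w (y + fun i => (k i : ℝ)) = w y) ∧
      r = ∫ y in unitCell d, M y (ξ + gradMat w y)}) :
    (∀ ξ, m₁ ‖ξ‖ ≤ f ξ ∧ f ξ ≤ m₂ ‖ξ‖) ∧
    (∀ ξ, f ξ = 0 ↔ ξ = 0) ∧
    (∀ ξ, f (-ξ) = f ξ) ∧
    ConvexOn ℝ univ f ∧
    Tendsto (fun ξ => f ξ / ‖ξ‖) (𝓝[≠] (0 : EuclideanSpace ℝ (Fin d × Fin N))) (𝓝 0) ∧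
    Tendsto (fun ξ => f ξ / ‖ξ‖)
      (comap (fun ξ : EuclideanSpace ℝ (Fin d × Fin N) => ‖ξ‖) atTop) atTop := by
  classical
  haveI := isProbability_unitCell (d := d)
  set S : EuclideanSpace ℝ (Fin d × Fin N) → Set ℝ := fun ξ =>
    {r : ℝ | ∃ w : (Fin d → ℝ) → (Fin N → ℝ), ContDiff ℝ (⊤ : ℕ∞) w ∧
      (∀ (y : Fin d → ℝ) (k : Fin d → ℤ), w (y + fun i => (k i : ℝ)) = w y) ∧
      r = ∫ y in unitCell d, M y (ξ + gradMat w y)} with hSdef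
  have hfS : ∀ ξ, f ξ = sInf (S ξ) := hf
  have hkey : ∀ ξ, ∀ r ∈ S ξ, m₁ ‖ξ‖ ≤ r := by
    rintro ξ r ⟨w, hw, hper, rfl⟩
    exact jensen_lower hd M hMmeas hMcont hm₁ hm₂ hsand ξ hw hper
  have hgrad0 : ∀ y : Fin d → ℝ,
      gradMat (fun _ : Fin d → ℝ => (0 : Fin N → ℝ)) y = 0 := by
    intro y
    ext p
    show fderiv ℝ (fun _ : Fin d → ℝ => (0 : Fin N → ℝ)) y (Pi.single p.1 1) p.2 = 0
    rw [fderiv_const_apply]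
    simp
  have hmem0 : ∀ ξ, (∫ y in unitCell d, M y ξ) ∈ S ξ := by
    intro ξ
    refine ⟨fun _ => 0, contDiff_const, fun _ _ => rfl, ?_⟩
    apply integral_congr_ae
    filter_upwards with y
    rw [hgrad0 y, add_zero]
  have hne : ∀ ξ, (S ξ).Nonempty := fun ξ => ⟨_, hmem0 ξ⟩
  have hbdd : ∀ ξ, BddBelow (S ξ) := fun ξ => ⟨m₁ ‖ξ‖, fun r hr => hkey ξ r hr⟩
  have hlow : ∀ ξ, m₁ ‖ξ‖ ≤ f ξ := by
    intro ξ; rw [hfS]; exact le_csInf (hne ξ) (hkey ξ)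
  have hupME : ∀ ξ, (∫ y in unitCell d, M y ξ) ≤ m₂ ‖ξ‖ := by
    intro ξ
    have hint : IntegrableOn (fun y => M y ξ) (unitCell d) :=
      integrableOn_M_comp M hMmeas hMcont hm₁ hm₂ hsand continuous_const
    have hae : (fun y => M y ξ) ≤ᵐ[(volume : Measure (Fin d → ℝ)).restrict (unitCell d)]
        fun _ => m₂ ‖ξ‖ := by
      filter_upwards [ae_restrict_of_ae hsand] with y hy using (hy ξ).2
    calc ∫ y in unitCell d, M y ξ ≤ ∫ _y in unitCell d, m₂ ‖ξ‖ :=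
          integral_mono_ae hint (integrable_const _) hae
      _ = m₂ ‖ξ‖ := by simp
  have hup : ∀ ξ, f ξ ≤ m₂ ‖ξ‖ := by
    intro ξ; rw [hfS]
    exact le_trans (csInf_le (hbdd ξ) (hmem0 ξ)) (hupME ξ)
  refine ⟨fun ξ => ⟨hlow ξ, hup ξ⟩, ?_, ?_, ?_, ?_, ?_⟩
  · -- zero iff
    intro ξ
    constructor
    · intro h0
      have h1 : m₁ ‖ξ‖ ≤ 0 := h0 ▸ hlow ξ
      have h2 : m₁ ‖ξ‖ = 0 := le_antisymm h1 (hm₁.2.1 _ (norm_nonneg _))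
      exact norm_eq_zero.mp ((hm₁.2.2.1 _ (norm_nonneg ξ)).mp h2)
    · rintro rfl
      refine le_antisymm ?_ ?_
      · simpa [nfp_zero hm₂] using hup 0
      · simpa [nfp_zero hm₁] using hlow 0
  · -- even
    have hSS : ∀ ξ r, r ∈ S ξ → r ∈ S (-ξ) := by
      rintro ξ r ⟨w, hw, hper, rfl⟩
      refine ⟨fun y => -(w y), hw.neg, fun y k => by show -w (y + fun i => ((k i : ℤ) : ℝ)) = -w y; rw [hper], ?_⟩
      apply integral_congr_ae
      filter_upwards [ae_restrict_of_ae hMeven] with y hy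
      have hgm : gradMat (fun y => -(w y)) y = -gradMat w y := by
        ext p
        show fderiv ℝ (fun y => -(w y)) y (Pi.single p.1 1) p.2
          = -(fderiv ℝ w y (Pi.single p.1 1) p.2)
        rw [fderiv_fun_neg]
        simp
      rw [hgm, show -ξ + -gradMat w y = -(ξ + gradMat w y) by abel, hy]
    intro ξ
    rw [hfS, hfS]
    congr 1
    ext r
    constructor
    · intro h
      have := hSS (-ξ) r h
      rwa [neg_neg] at this
    · exact hSS ξ r
  · -- convex
    refine ⟨convex_univ, ?_⟩
    intro ξ₁ _ ξ₂ _ a b ha hb hab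
    rcases eq_or_lt_of_le ha with rfl | hapos
    · have hb1 : b = 1 := by linarith
      subst hb1; simp
    rcases eq_or_lt_of_le hb with rfl | hbpos
    · have ha1 : a = 1 := by linarith
      subst ha1; simp
    rw [smul_eq_mul, smul_eq_mul]
    refine le_of_forall_pos_le_add ?_
    intro ε hε
    obtain ⟨r₁, hr₁mem, hr₁⟩ := Real.lt_sInf_add_pos (hne ξ₁) hε
    obtain ⟨r₂, hr₂mem, hr₂⟩ := Real.lt_sInf_add_pos (hne ξ₂) hε
    obtain ⟨w₁, hw₁, hper₁, rfl⟩ := hr₁mem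
    obtain ⟨w₂, hw₂, hper₂, rfl⟩ := hr₂mem
    rw [← hfS ξ₁] at hr₁
    rw [← hfS ξ₂] at hr₂
    set w : (Fin d → ℝ) → (Fin N → ℝ) := fun y => a • w₁ y + b • w₂ y with hwdef
    have hw : ContDiff ℝ (⊤ : ℕ∞) w := (hw₁.const_smul a).add (hw₂.const_smul b)
    have hper : ∀ (y : Fin d → ℝ) (k : Fin d → ℤ), w (y + fun i => (k i : ℝ)) = w y := by
      intro y k
      rw [hwdef]
      simp only
      rw [hper₁, hper₂]
    have hgm : ∀ y, gradMat w y = a • gradMat w₁ y + b • gradMat w₂ y := by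
      intro y
      ext p
      have hd₁ : DifferentiableAt ℝ w₁ y := (hw₁.differentiable (by simp)).differentiableAt
      have hd₂ : DifferentiableAt ℝ w₂ y := (hw₂.differentiable (by simp)).differentiableAt
      show fderiv ℝ w y (Pi.single p.1 1) p.2 = _
      rw [hwdef]
      rw [fderiv_fun_add (f := fun y => a • w₁ y) (g := fun y => b • w₂ y) ((hd₁.const_smul a)) ((hd₂.const_smul b)),
        fderiv_fun_const_smul hd₁ a, fderiv_fun_const_smul hd₂ b]
      rfl
    have hint₁ : IntegrableOn (fun y => M y (ξ₁ + gradMat w₁ y)) (unitCell d) :=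
      integrableOn_M_comp M hMmeas hMcont hm₁ hm₂ hsand
        (continuous_const.add (gradMat_continuous hw₁))
    have hint₂ : IntegrableOn (fun y => M y (ξ₂ + gradMat w₂ y)) (unitCell d) :=
      integrableOn_M_comp M hMmeas hMcont hm₁ hm₂ hsand
        (continuous_const.add (gradMat_continuous hw₂))
    have hintw : IntegrableOn (fun y => M y ((a • ξ₁ + b • ξ₂) + gradMat w y)) (unitCell d) :=
      integrableOn_M_comp M hMmeas hMcont hm₁ hm₂ hsand
        (continuous_const.add (gradMat_continuous hw))
    have hptwise : ∀ᵐ y ∂((volume : Measure (Fin d → ℝ)).restrict (unitCell d)),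
        M y ((a • ξ₁ + b • ξ₂) + gradMat w y)
          ≤ a * M y (ξ₁ + gradMat w₁ y) + b * M y (ξ₂ + gradMat w₂ y) := by
      filter_upwards [ae_restrict_of_ae hMconv] with y hy
      have hrearr : (a • ξ₁ + b • ξ₂) + gradMat w y
          = a • (ξ₁ + gradMat w₁ y) + b • (ξ₂ + gradMat w₂ y) := by
        rw [hgm y, smul_add, smul_add]
        abel
      rw [hrearr]
      have := hy.2 (mem_univ (ξ₁ + gradMat w₁ y)) (mem_univ (ξ₂ + gradMat w₂ y))
        hapos.le hbpos.le hab
      simpa [smul_eq_mul] using this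
    have h₁ : (∫ y in unitCell d, M y (ξ₁ + gradMat w₁ y)) ≤ f ξ₁ + ε := hr₁.le
    have h₂ : (∫ y in unitCell d, M y (ξ₂ + gradMat w₂ y)) ≤ f ξ₂ + ε := hr₂.le
    calc f (a • ξ₁ + b • ξ₂) = sInf (S (a • ξ₁ + b • ξ₂)) := hfS _
      _ ≤ ∫ y in unitCell d, M y ((a • ξ₁ + b • ξ₂) + gradMat w y) :=
          csInf_le (hbdd _) ⟨w, hw, hper, rfl⟩
      _ ≤ ∫ y in unitCell d,
            (a * M y (ξ₁ + gradMat w₁ y) + b * M y (ξ₂ + gradMat w₂ y)) :=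
          integral_mono_ae hintw ((hint₁.const_mul a).add (hint₂.const_mul b)) hptwise
      _ = a * (∫ y in unitCell d, M y (ξ₁ + gradMat w₁ y))
            + b * ∫ y in unitCell d, M y (ξ₂ + gradMat w₂ y) := by
          rw [integral_add (hint₁.const_mul a) (hint₂.const_mul b),
            integral_const_mul a, integral_const_mul b]
      _ ≤ a * (f ξ₁ + ε) + b * (f ξ₂ + ε) :=
          add_le_add (mul_le_mul_of_nonneg_left h₁ hapos.le)
            (mul_le_mul_of_nonneg_left h₂ hbpos.le)
      _ = a * f ξ₁ + b * f ξ₂ + (a + b) * ε := by ring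
      _ = a * f ξ₁ + b * f ξ₂ + ε := by rw [hab, one_mul]
  · -- tendsto zero
    have hnorm : Tendsto (fun ξ : EuclideanSpace ℝ (Fin d × Fin N) => ‖ξ‖)
        (𝓝[≠] (0 : EuclideanSpace ℝ (Fin d × Fin N))) (𝓝[>] (0:ℝ)) := by
      rw [tendsto_nhdsWithin_iff]
      constructor
      · simpa using (continuous_norm.tendsto
          (0 : EuclideanSpace ℝ (Fin d × Fin N))).mono_left nhdsWithin_le_nhds
      · filter_upwards [self_mem_nhdsWithin] with ξ hξ
        exact norm_pos_iff.mpr hξ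
    have h2 : Tendsto (fun ξ : EuclideanSpace ℝ (Fin d × Fin N) => m₂ ‖ξ‖ / ‖ξ‖)
        (𝓝[≠] (0 : EuclideanSpace ℝ (Fin d × Fin N))) (𝓝 0) :=
      hm₂.2.2.2.1.comp hnorm
    refine tendsto_of_tendsto_of_tendsto_of_le_of_le' tendsto_const_nhds h2 ?_ ?_
    · filter_upwards with ξ
      exact div_nonneg (le_trans (hm₁.2.1 _ (norm_nonneg _)) (hlow ξ)) (norm_nonneg _)
    · filter_upwards [self_mem_nhdsWithin] with ξ hξ
      have hpos : 0 < ‖ξ‖ := norm_pos_iff.mpr hξ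
      exact div_le_div_of_nonneg_right (hup ξ) hpos.le |>.trans_eq rfl
  · -- tendsto atTop
    have hcomp : Tendsto (fun ξ : EuclideanSpace ℝ (Fin d × Fin N) => m₁ ‖ξ‖ / ‖ξ‖)
        (comap (fun ξ : EuclideanSpace ℝ (Fin d × Fin N) => ‖ξ‖) atTop) atTop :=
      hm₁.2.2.2.2.comp tendsto_comap
    refine tendsto_atTop_mono' _ ?_ hcomp
    have hev : ∀ᶠ ξ in comap (fun ξ : EuclideanSpace ℝ (Fin d × Fin N) => ‖ξ‖) atTop,
        1 ≤ ‖ξ‖ := preimage_mem_comap (Ici_mem_atTop 1)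
    filter_upwards [hev] with ξ hξ
    have hpos : 0 < ‖ξ‖ := lt_of_lt_of_le one_pos hξ
    exact div_le_div_of_nonneg_right (hlow ξ) hpos.le |>.trans_eq rfl
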